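/- Fix integers N ≥ 2 and dim ≥ 1. For φ = (φ₁, φ₂) ∈ ℝ^{dim×dim} × ℝ^{dim×dim} and X ∈ ℝ^{N×dim} define f(φ, X) = softmax(X φ₁ Xᵀ) X φ₂ ∈ ℝ^{N×dim}. The map φ ↦ f(φ, X) is smooth; let ∂_φ f(φ, X) denote its differential at φ (a linear map ℝ^{dim×dim} × ℝ^{dim×dim} → ℝ^{N×dim}) and [∂_φ f(φ, X)]ᵀ its adjoint with respect to the Frobenius inner products. If every row of φ₂ is nonzero, then span{[∂_φ f(φ, X)]ᵀ Δ : X ∈ ℝ^{N×dim}, Δ ∈ ℝ^{N×dim}} = ℝ^{dim×dim} × ℝ^{dim×dim}, i.e., these adjoint-differential images span the full parameter space of the reparameterization (φ₁, φ₂) = (QᵀK, VᵀO) of a single attention layer. -/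

import Mathlib

open scoped Matrix
open Finset

/-- `softmax(z)ᵢ = exp(zᵢ) / ∑ⱼ exp(zⱼ)`. -/
noncomputable def softmaxFun {ι : Type*} [Fintype ι] (z : ι → ℝ) : ι → ℝ :=
  fun i => Real.exp (z i) / ∑ j, Real.exp (z j)

/-- Row-wise softmax of a matrix. -/
noncomputable def rowSoftmax {m n : ℕ} (A : Matrix (Fin m) (Fin n) ℝ) :
    Matrix (Fin m) (Fin n) ℝ :=
  Matrix.of fun i => softmaxFun (A i)

/-- First component `φ₁` of the attention reparameterization. -/
noncomputable def phiMat {dim : ℕ} (c : Fin 2)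
    (φ : EuclideanSpace ℝ (Fin 2 × Fin dim × Fin dim)) : Matrix (Fin dim) (Fin dim) ℝ :=
  Matrix.of fun i j => φ (c, i, j)

/-- The reparameterized single attention layer
`f(φ, X) = softmax(X φ₁ Xᵀ) X φ₂`, viewed (for fixed input `X`) as a map between the
Euclidean parameter space `φ = (φ₁, φ₂)` and the Euclidean output space `ℝ^{N×dim}`. -/
noncomputable def attnReparamMap (N dim : ℕ)
    (φ : EuclideanSpace ℝ (Fin 2 × Fin dim × Fin dim))
    (X : Matrix (Fin N) (Fin dim) ℝ) : EuclideanSpace ℝ (Fin N × Fin dim) :=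
  (EuclideanSpace.equiv (Fin N × Fin dim) ℝ).symm fun p =>
    (rowSoftmax (X * phiMat 0 φ * Xᵀ) * X * phiMat 1 φ) p.1 p.2

section Aux

variable {N dim : ℕ}

lemma equiv_symm_apply (f : Fin N × Fin dim → ℝ) (p : Fin N × Fin dim) :
    (EuclideanSpace.equiv (Fin N × Fin dim) ℝ).symm f p = f p := rfl

lemma attn_apply (ψ : EuclideanSpace ℝ (Fin 2 × Fin dim × Fin dim))
    (X : Matrix (Fin N) (Fin dim) ℝ) (p : Fin N × Fin dim) :
    attnReparamMap N dim ψ X p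
      = (rowSoftmax (X * phiMat 0 ψ * Xᵀ) * (X * phiMat 1 ψ)) p.1 p.2 := by
  rw [attnReparamMap, equiv_symm_apply, Matrix.mul_assoc]

lemma XMXt_apply (ψ : EuclideanSpace ℝ (Fin 2 × Fin dim × Fin dim)) (c : Fin 2)
    (X : Matrix (Fin N) (Fin dim) ℝ) (k k' : Fin N) :
    (X * phiMat c ψ * Xᵀ) k k' = ∑ m, (∑ l, X k l * ψ (c, l, m)) * X k' m := by
  simp [Matrix.mul_apply, phiMat]

lemma XM_apply (ψ : EuclideanSpace ℝ (Fin 2 × Fin dim × Fin dim)) (c : Fin 2)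
    (X : Matrix (Fin N) (Fin dim) ℝ) (k : Fin N) (j : Fin dim) :
    (X * phiMat c ψ) k j = ∑ l, X k l * ψ (c, l, j) := by
  simp [Matrix.mul_apply, phiMat]

lemma entry_contDiff (X : Matrix (Fin N) (Fin dim) ℝ) (i : Fin N) (j : Fin dim) :
    ContDiff ℝ (⊤ : ℕ∞) (fun ψ : EuclideanSpace ℝ (Fin 2 × Fin dim × Fin dim) =>
      (rowSoftmax (X * phiMat 0 ψ * Xᵀ) * (X * phiMat 1 ψ)) i j) := by
  have hproj : ∀ q : Fin 2 × Fin dim × Fin dim,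
      ContDiff ℝ (⊤ : ℕ∞) (fun ψ : EuclideanSpace ℝ (Fin 2 × Fin dim × Fin dim) => ψ q) :=
    fun q => (EuclideanSpace.proj (𝕜 := ℝ) q).contDiff
  have hE : ∀ (c : Fin 2) (k k' : Fin N),
      ContDiff ℝ (⊤ : ℕ∞) (fun ψ : EuclideanSpace ℝ (Fin 2 × Fin dim × Fin dim) =>
        (X * phiMat c ψ * Xᵀ) k k') := by
    intro c k k'
    simp only [XMXt_apply]
    refine ContDiff.sum fun m _ => ContDiff.mul ?_ contDiff_const
    exact ContDiff.sum fun l _ => ContDiff.mul contDiff_const (hproj (c, l, m))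
  have hS : ∀ k : Fin N,
      ContDiff ℝ (⊤ : ℕ∞) (fun ψ : EuclideanSpace ℝ (Fin 2 × Fin dim × Fin dim) =>
        rowSoftmax (X * phiMat 0 ψ * Xᵀ) i k) := by
    intro k
    have heq : (fun ψ : EuclideanSpace ℝ (Fin 2 × Fin dim × Fin dim) =>
        rowSoftmax (X * phiMat 0 ψ * Xᵀ) i k)
        = fun ψ => Real.exp ((X * phiMat 0 ψ * Xᵀ) i k) /
            ∑ k', Real.exp ((X * phiMat 0 ψ * Xᵀ) i k') := rfl
    rw [heq]
    refine ContDiff.div (Real.contDiff_exp.comp (hE 0 i k))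
      (ContDiff.sum fun k' _ => Real.contDiff_exp.comp (hE 0 i k')) ?_
    intro ψ
    exact ne_of_gt (Finset.sum_pos (fun _ _ => Real.exp_pos _) ⟨i, Finset.mem_univ i⟩)
  have heq : (fun ψ : EuclideanSpace ℝ (Fin 2 × Fin dim × Fin dim) =>
      (rowSoftmax (X * phiMat 0 ψ * Xᵀ) * (X * phiMat 1 ψ)) i j)
      = fun ψ => ∑ k, rowSoftmax (X * phiMat 0 ψ * Xᵀ) i k *
          ∑ l, X k l * ψ (1, l, j) := by
    funext ψ
    simp [Matrix.mul_apply, phiMat]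
  rw [heq]
  exact ContDiff.sum fun k _ => (hS k).mul
    (ContDiff.sum fun l _ => contDiff_const.mul (hproj _))

lemma attn_contDiff (X : Matrix (Fin N) (Fin dim) ℝ) :
    ContDiff ℝ (⊤ : ℕ∞) (fun ψ => attnReparamMap N dim ψ X) := by
  have h : ContDiff ℝ (⊤ : ℕ∞) (fun (ψ : EuclideanSpace ℝ (Fin 2 × Fin dim × Fin dim))
      (p : Fin N × Fin dim) =>
      (rowSoftmax (X * phiMat 0 ψ * Xᵀ) * (X * phiMat 1 ψ)) p.1 p.2) :=
    contDiff_pi.2 fun p => entry_contDiff X p.1 p.2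
  have h2 := (((EuclideanSpace.equiv (Fin N × Fin dim) ℝ).symm :
      (Fin N × Fin dim → ℝ) →L[ℝ] EuclideanSpace ℝ (Fin N × Fin dim)).contDiff).comp h
  convert h2 using 2 with ψ
  rw [attnReparamMap]
  simp only [Function.comp, ContinuousLinearEquiv.coe_coe]
  congr 1
  funext p
  rw [Matrix.mul_assoc]

end Aux

section Eval

variable {N dim : ℕ} [NeZero N]

/-- Evaluation at the all-rows-equal input. -/
lemma eval_const_rows (a : Fin dim → ℝ)
    (ψ : EuclideanSpace ℝ (Fin 2 × Fin dim × Fin dim)) (p : Fin N × Fin dim) :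
    attnReparamMap N dim ψ (Matrix.of fun _ l => a l) p = ∑ l, a l * ψ (1, l, p.2) := by
  set X : Matrix (Fin N) (Fin dim) ℝ := Matrix.of fun _ l => a l with hX
  have hN0 : (N : ℝ) ≠ 0 := Nat.cast_ne_zero.mpr (NeZero.ne N)
  set c : ℝ := ∑ m, (∑ l, a l * ψ (0, l, m)) * a m with hc
  have hconst : ∀ k k' : Fin N, (X * phiMat 0 ψ * Xᵀ) k k' = c := by
    intro k k'; rw [XMXt_apply]; rfl
  have hsm : ∀ k : Fin N, rowSoftmax (X * phiMat 0 ψ * Xᵀ) p.1 k = 1 / N := by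
    intro k
    show Real.exp ((X * phiMat 0 ψ * Xᵀ) p.1 k) /
        (∑ k', Real.exp ((X * phiMat 0 ψ * Xᵀ) p.1 k')) = 1 / N
    simp only [hconst]
    rw [Finset.sum_const, Finset.card_univ, Fintype.card_fin, nsmul_eq_mul]
    rw [div_eq_div_iff (by positivity) hN0]
    ring
  rw [attn_apply, Matrix.mul_apply]
  have hterm : ∀ k : Fin N,
      rowSoftmax (X * phiMat 0 ψ * Xᵀ) p.1 k * (X * phiMat 1 ψ) k p.2
      = (1 / N) * ∑ l, a l * ψ (1, l, p.2) := by
    intro k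
    rw [hsm k, XM_apply]
    rfl
  rw [Finset.sum_congr rfl fun k _ => hterm k, Finset.sum_const, Finset.card_univ,
    Fintype.card_fin, nsmul_eq_mul]
  field_simp

/-- Evaluation at the input with first row `a` and all other rows `b`, at an entry in row 0. -/
lemma eval_two_rows (a b : Fin dim → ℝ)
    (ψ : EuclideanSpace ℝ (Fin 2 × Fin dim × Fin dim)) (j : Fin dim) :
    attnReparamMap N dim ψ (Matrix.of fun i l => if i = 0 then a l else b l) ((0 : Fin N), j)
      = (Real.exp (∑ m, (∑ l, a l * ψ (0, l, m)) * a m) * (∑ l, a l * ψ (1, l, j))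
          + ((N : ℝ) - 1) * Real.exp (∑ m, (∑ l, a l * ψ (0, l, m)) * b m)
            * (∑ l, b l * ψ (1, l, j)))
        / (Real.exp (∑ m, (∑ l, a l * ψ (0, l, m)) * a m)
          + ((N : ℝ) - 1) * Real.exp (∑ m, (∑ l, a l * ψ (0, l, m)) * b m)) := by
  set X : Matrix (Fin N) (Fin dim) ℝ := Matrix.of fun i l => if i = 0 then a l else b l with hX
  set qa : ℝ := ∑ m, (∑ l, a l * ψ (0, l, m)) * a m with hqa
  set qb : ℝ := ∑ m, (∑ l, a l * ψ (0, l, m)) * b m with hqb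
  set A : ℝ := ∑ l, a l * ψ (1, l, j) with hA
  set B : ℝ := ∑ l, b l * ψ (1, l, j) with hB
  have hNge : 1 ≤ N := Nat.one_le_iff_ne_zero.mpr (NeZero.ne N)
  have hN1 : ((N - 1 : ℕ) : ℝ) = (N : ℝ) - 1 := by
    push_cast [Nat.cast_sub hNge]; ring
  have hz : ∀ k : Fin N, (X * phiMat 0 ψ * Xᵀ) 0 k = if k = 0 then qa else qb := by
    intro k
    rw [XMXt_apply]
    by_cases h : k = 0
    · subst h
      rw [if_pos rfl, hqa]
      exact Finset.sum_congr rfl fun m _ => by simp [hX]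
    · rw [if_neg h, hqb]
      exact Finset.sum_congr rfl fun m _ => by simp [hX, h]
  have hcard : (Finset.univ.erase (0 : Fin N)).card = N - 1 := by
    rw [Finset.card_erase_of_mem (Finset.mem_univ _), Finset.card_univ, Fintype.card_fin]
  have hD : (∑ k', Real.exp ((X * phiMat 0 ψ * Xᵀ) 0 k'))
      = Real.exp qa + ((N : ℝ) - 1) * Real.exp qb := by
    rw [← Finset.add_sum_erase _ _ (Finset.mem_univ (0 : Fin N)), hz 0, if_pos rfl]
    congr 1
    rw [Finset.sum_congr rfl (fun k hk => by
      rw [hz k, if_neg (Finset.mem_erase.mp hk).1]),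
      Finset.sum_const, hcard, nsmul_eq_mul, hN1]
  set Dv : ℝ := Real.exp qa + ((N : ℝ) - 1) * Real.exp qb with hDv
  have hDpos : 0 < Dv := by
    have h1 : (1 : ℝ) ≤ (N : ℝ) := by exact_mod_cast hNge
    nlinarith [Real.exp_pos qa, Real.exp_pos qb]
  have hXM : ∀ k : Fin N, (X * phiMat 1 ψ) k j = if k = 0 then A else B := by
    intro k
    rw [XM_apply]
    by_cases h : k = 0
    · subst h
      rw [if_pos rfl, hA]
      exact Finset.sum_congr rfl fun m _ => by simp [hX]
    · rw [if_neg h, hB]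
      exact Finset.sum_congr rfl fun m _ => by simp [hX, h]
  rw [attn_apply, Matrix.mul_apply]
  have hterm : ∀ k : Fin N,
      rowSoftmax (X * phiMat 0 ψ * Xᵀ) 0 k * (X * phiMat 1 ψ) k j
      = Real.exp (if k = 0 then qa else qb) / Dv * (if k = 0 then A else B) := by
    intro k
    have : rowSoftmax (X * phiMat 0 ψ * Xᵀ) 0 k
        = Real.exp ((X * phiMat 0 ψ * Xᵀ) 0 k) /
            ∑ k', Real.exp ((X * phiMat 0 ψ * Xᵀ) 0 k') := rfl
    rw [this, hD, hz k, hXM k]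
  rw [Finset.sum_congr rfl fun k _ => hterm k]
  rw [← Finset.add_sum_erase _ _ (Finset.mem_univ (0 : Fin N)), if_pos rfl, if_pos rfl]
  rw [Finset.sum_congr rfl (fun k hk => by
    rw [if_neg (Finset.mem_erase.mp hk).1, if_neg (Finset.mem_erase.mp hk).1]),
    Finset.sum_const, hcard, nsmul_eq_mul, hN1]
  field_simp

end Eval

/-- For `N ≥ 2`, if every row of `φ₂` is nonzero, then the map `φ ↦ f(φ, X)` is smooth
and the images of the adjoints of its differentials,
`{[∂_φ f(φ, X)]ᵀ Δ : X ∈ ℝ^{N×dim}, Δ ∈ ℝ^{N×dim}}`, span the whole parameter space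
`ℝ^{dim×dim} × ℝ^{dim×dim}` of the reparameterization `(φ₁, φ₂) = (QᵀK, VᵀO)`. -/
theorem attention_reparam_full_span
    (N dim : ℕ) (hN : 2 ≤ N) (hdim : 1 ≤ dim)
    (φ : EuclideanSpace ℝ (Fin 2 × Fin dim × Fin dim))
    (hrows : ∀ i : Fin dim, (fun j => phiMat 1 φ i j) ≠ 0) :
    (∀ X : Matrix (Fin N) (Fin dim) ℝ, ContDiff ℝ (⊤ : ℕ∞) (fun ψ => attnReparamMap N dim ψ X)) ∧
    Submodule.span ℝ {v : EuclideanSpace ℝ (Fin 2 × Fin dim × Fin dim) |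
        ∃ (X : Matrix (Fin N) (Fin dim) ℝ) (Δ : EuclideanSpace ℝ (Fin N × Fin dim)),
          v = (fderiv ℝ (fun ψ => attnReparamMap N dim ψ X) φ).adjoint Δ} = ⊤ := by
  haveI : NeZero N := ⟨by omega⟩
  refine ⟨fun X => attn_contDiff X, ?_⟩
  rw [← Submodule.orthogonal_eq_bot_iff, Submodule.eq_bot_iff]
  intro v hv
  -- the differential applied to v vanishes for every X
  have hAv : ∀ X : Matrix (Fin N) (Fin dim) ℝ,
      fderiv ℝ (fun ψ => attnReparamMap N dim ψ X) φ v = 0 := by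
    intro X
    set A := fderiv ℝ (fun ψ => attnReparamMap N dim ψ X) φ with hA
    have h1 : ∀ Δ : EuclideanSpace ℝ (Fin N × Fin dim), (inner ℝ Δ (A v) : ℝ) = 0 := by
      intro Δ
      have hmem : (ContinuousLinearMap.adjoint A) Δ ∈ Submodule.span ℝ
          {v : EuclideanSpace ℝ (Fin 2 × Fin dim × Fin dim) |
            ∃ (X : Matrix (Fin N) (Fin dim) ℝ) (Δ : EuclideanSpace ℝ (Fin N × Fin dim)),
              v = (fderiv ℝ (fun ψ => attnReparamMap N dim ψ X) φ).adjoint Δ} :=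
        Submodule.subset_span ⟨X, Δ, rfl⟩
      have := (Submodule.mem_orthogonal _ v).mp hv _ hmem
      rwa [ContinuousLinearMap.adjoint_inner_left] at this
    have := h1 (A v)
    rwa [inner_self_eq_zero] at this
  -- directional derivatives of coordinates vanish
  have hdir : ∀ (X : Matrix (Fin N) (Fin dim) ℝ) (p : Fin N × Fin dim) (d : ℝ),
      HasDerivAt (fun t : ℝ => attnReparamMap N dim (φ + t • v) X p) d 0 → d = 0 := by
    intro X p d hd
    have hL : HasDerivAt (fun t : ℝ => φ + t • v) v 0 := by
      simpa using ((hasDerivAt_id (0 : ℝ)).smul_const v).const_add φ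
    have hF : HasFDerivAt (fun ψ => attnReparamMap N dim ψ X)
        (fderiv ℝ (fun ψ => attnReparamMap N dim ψ X) φ) (φ + (0 : ℝ) • v) := by
      simpa using (((attn_contDiff X).differentiable (by simp)) φ).hasFDerivAt
    have hFL := hF.comp_hasDerivAt 0 hL
    have hcoord := (EuclideanSpace.proj p).hasFDerivAt.comp_hasDerivAt 0 hFL
    have hzero : HasDerivAt (fun t : ℝ => attnReparamMap N dim (φ + t • v) X p) 0 0 := by
      simpa [Function.comp_def, hAv X] using hcoord
    exact hd.unique hzero
  -- Step 1 : the φ₂-block of v vanishes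
  have hv2 : ∀ (l i : Fin dim), v (1, l, i) = 0 := by
    intro l i
    set a : Fin dim → ℝ := Pi.single l 1 with ha
    have hfun : (fun t : ℝ =>
        attnReparamMap N dim (φ + t • v) (Matrix.of fun _ m => a m) ((0 : Fin N), i))
        = fun t => (∑ m, a m * φ (1, m, i)) + t * (∑ m, a m * v (1, m, i)) := by
      funext t
      rw [eval_const_rows]
      have : ∀ m, a m * (φ + t • v) (1, m, i)
          = a m * φ (1, m, i) + t * (a m * v (1, m, i)) := by
        intro m
        have : (φ + t • v) (1, m, i) = φ (1, m, i) + t * v (1, m, i) := rfl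
        rw [this]; ring
      rw [Finset.sum_congr rfl fun m _ => this m, Finset.sum_add_distrib, ← Finset.mul_sum]
    have hder : HasDerivAt (fun t : ℝ =>
        attnReparamMap N dim (φ + t • v) (Matrix.of fun _ m => a m) ((0 : Fin N), i))
        (∑ m, a m * v (1, m, i)) 0 := by
      rw [hfun]
      exact (hasDerivAt_mul_const _).const_add _
    have h0 := hdir _ _ _ hder
    simpa [ha, Pi.single_apply] using h0
  -- Step 2 : the φ₁-block of v vanishes
  have hv1 : ∀ (l i : Fin dim), v (0, l, i) = 0 := by
    intro l i
    obtain ⟨j, hj⟩ : ∃ j, phiMat 1 φ i j ≠ 0 := by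
      by_contra h
      push_neg at h
      exact hrows i (funext h)
    set a : Fin dim → ℝ := Pi.single l 1 with ha
    set b : Fin dim → ℝ := fun m => (Pi.single l 1 : Fin dim → ℝ) m - (Pi.single i 1 : Fin dim → ℝ) m with hb
    -- constants along the line
    set α : ℝ := ∑ m, (∑ l', a l' * φ (0, l', m)) * a m with hα
    set β : ℝ := ∑ m, (∑ l', a l' * φ (0, l', m)) * b m with hβ
    set σ : ℝ := ∑ m, (∑ l', a l' * v (0, l', m)) * a m with hσ
    set τ : ℝ := ∑ m, (∑ l', a l' * v (0, l', m)) * b m with hτ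
    set A : ℝ := ∑ m, a m * φ (1, m, j) with hA
    set B : ℝ := ∑ m, b m * φ (1, m, j) with hB
    set c : ℝ := (N : ℝ) - 1 with hc
    have hcpos : 0 < c := by
      have : (2 : ℝ) ≤ (N : ℝ) := by exact_mod_cast hN
      simp only [hc]; linarith
    have hfun : (fun t : ℝ => attnReparamMap N dim (φ + t • v)
          (Matrix.of fun k m => if k = 0 then a m else b m) ((0 : Fin N), j))
        = fun t => (Real.exp (α + t * σ) * A + c * Real.exp (β + t * τ) * B)
            / (Real.exp (α + t * σ) + c * Real.exp (β + t * τ)) := by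
      funext t
      rw [eval_two_rows]
      have happly : ∀ q : Fin 2 × Fin dim × Fin dim, (φ + t • v) q = φ q + t * v q :=
        fun q => rfl
      have hqa : (∑ m, (∑ l', a l' * (φ + t • v) (0, l', m)) * a m) = α + t * σ := by
        simp only [happly]
        rw [hα, hσ, Finset.mul_sum, ← Finset.sum_add_distrib]
        refine Finset.sum_congr rfl fun m _ => ?_
        have h1 : (∑ x, a x * (φ (0, x, m) + t * v (0, x, m)))
            = (∑ x, a x * φ (0, x, m)) + t * ∑ x, a x * v (0, x, m) := by
          rw [Finset.mul_sum, ← Finset.sum_add_distrib]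
          exact Finset.sum_congr rfl fun x _ => by ring
        rw [h1]; ring
      have hqb : (∑ m, (∑ l', a l' * (φ + t • v) (0, l', m)) * b m) = β + t * τ := by
        simp only [happly]
        rw [hβ, hτ, Finset.mul_sum, ← Finset.sum_add_distrib]
        refine Finset.sum_congr rfl fun m _ => ?_
        have h1 : (∑ x, a x * (φ (0, x, m) + t * v (0, x, m)))
            = (∑ x, a x * φ (0, x, m)) + t * ∑ x, a x * v (0, x, m) := by
          rw [Finset.mul_sum, ← Finset.sum_add_distrib]
          exact Finset.sum_congr rfl fun x _ => by ring
        rw [h1]; ring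
      have hAc : (∑ m, a m * (φ + t • v) (1, m, j)) = A := by
        simp only [happly]
        rw [hA]
        refine Finset.sum_congr rfl fun m _ => ?_
        rw [hv2 m j]; ring
      have hBc : (∑ m, b m * (φ + t • v) (1, m, j)) = B := by
        simp only [happly]
        rw [hB]
        refine Finset.sum_congr rfl fun m _ => ?_
        rw [hv2 m j]; ring
      rw [hqa, hqb, hAc, hBc]
    have hlinea : HasDerivAt (fun t : ℝ => α + t * σ) σ 0 :=
      (hasDerivAt_mul_const σ).const_add α
    have hlineb : HasDerivAt (fun t : ℝ => β + t * τ) τ 0 :=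
      (hasDerivAt_mul_const τ).const_add β
    have hea : HasDerivAt (fun t : ℝ => Real.exp (α + t * σ)) (Real.exp (α + 0 * σ) * σ) 0 :=
      hlinea.exp
    have heb : HasDerivAt (fun t : ℝ => Real.exp (β + t * τ)) (Real.exp (β + 0 * τ) * τ) 0 :=
      hlineb.exp
    have hden0 : (Real.exp (α + 0 * σ) + c * Real.exp (β + 0 * τ)) ≠ 0 := by
      have h1 := Real.exp_pos (α + 0 * σ)
      have h2 := Real.exp_pos (β + 0 * τ)
      positivity
    have hg := ((hea.mul_const A).add ((heb.const_mul c).mul_const B)).div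
      (hea.add (heb.const_mul c)) hden0
    have h0 := hdir _ _ _ (by rw [hfun]; exact hg)
    have h0' := (div_eq_zero_iff.mp h0).resolve_right (pow_ne_zero 2 hden0)
    simp only [zero_mul, add_zero, Pi.add_apply] at h0'
    have hEpos : 0 < Real.exp α := Real.exp_pos α
    have hGpos : 0 < Real.exp β := Real.exp_pos β
    have hkey : c * Real.exp α * Real.exp β * ((σ - τ) * (A - B)) = 0 := by
      linear_combination h0'
    have hfactor : (σ - τ) * (A - B) = 0 := by
      have hne : c * Real.exp α * Real.exp β ≠ 0 := by positivity
      exact (mul_eq_zero.mp hkey).resolve_left hne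
    -- compute σ - τ = v (0, l, i) and A - B = phiMat 1 φ i j
    have hστ : σ - τ = v (0, l, i) := by
      rw [hσ, hτ, ← Finset.sum_sub_distrib]
      have : ∀ m, (∑ l', a l' * v (0, l', m)) * a m - (∑ l', a l' * v (0, l', m)) * b m
          = v (0, l, m) * (Pi.single i 1 : Fin dim → ℝ) m := by
        intro m
        have hin : (∑ l', a l' * v (0, l', m)) = v (0, l, m) := by
          simp [ha, Pi.single_apply]
        rw [hin, hb, ha]
        ring
      rw [Finset.sum_congr rfl fun m _ => this m]
      simp [Pi.single_apply]
    have hAB : A - B = phiMat 1 φ i j := by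
      rw [hA, hB, ← Finset.sum_sub_distrib]
      have : ∀ m, a m * φ (1, m, j) - b m * φ (1, m, j)
          = (Pi.single i 1 : Fin dim → ℝ) m * φ (1, m, j) := by
        intro m
        rw [hb, ha]; ring
      rw [Finset.sum_congr rfl fun m _ => this m]
      simp [Pi.single_apply, phiMat]
    rw [hστ, hAB] at hfactor
    exact (mul_eq_zero.mp hfactor).resolve_right hj
  -- conclude v = 0
  ext q
  obtain ⟨cc, l, m⟩ := q
  fin_cases cc
  · exact hv1 l m
  · exact hv2 l m
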